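/- arXiv:2510.10724 — 2 statements merged into one kernel-verified Lean document; each statement's English description precedes it below -/
import Mathlib

section
/- Define h(x,y) = e^x + e^y − 2·(e^x − e^y)/(x − y) for x ≠ y. Then for any a < b < c < d, h(a,c)·h(b,d) ≥ h(b,c)·h(a,d) + h(a,b)·h(c,d). -/
open MeasureTheory Real Filter Finset Asymptotics

/-- Divided difference of the exponential at nodes `x 0, …, x n`
(Hermite–Genocchi iterated-integral form, valid for repeated nodes). -/
noncomputable def expDD {n : ℕ} (x : Fin (n + 1) → ℝ) : ℝ :=
  ∫ t in {t : Fin n → ℝ | (∀ i, 0 ≤ t i ∧ t i ≤ 1) ∧ ∀ i j : Fin n, i ≤ j → t j ≤ t i},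
    Real.exp (x 0 + ∑ i : Fin n, t i * (x i.succ - x i.castSucc))

/-- Node tuple `a 0 ≤ … ≤ a (n-1)` followed by `x` with multiplicity `p+1`
and `y` with multiplicity `q+1`. -/
noncomputable def nodesPQ (n p q : ℕ) (a : Fin n → ℝ) (x y : ℝ) :
    Fin (n + (p + 1) + (q + 1)) → ℝ := fun i =>
  if h : (i : ℕ) < n then a ⟨i, h⟩ else if (i : ℕ) < n + (p + 1) then x else y

/-- `Kₙ(x,y) = exp[a₁,…,aₙ, x^(p+1), y^(q+1)]`. -/
noncomputable def Kn (n p q : ℕ) (a : Fin n → ℝ) (x y : ℝ) : ℝ :=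
  expDD (nodesPQ n p q a x y)

/-- Beta-weighted integral form of `exp[x^(p+1), y^(q+1)]`. -/
noncomputable def K0int (p q : ℕ) (x y : ℝ) : ℝ :=
  (1 / ((Nat.factorial p : ℝ) * (Nat.factorial q : ℝ))) *
    ∫ τ in (0:ℝ)..1, τ ^ p * (1 - τ) ^ q * Real.exp (τ * x + (1 - τ) * y)

/-- First divided difference of the exponential. -/
noncomputable def dd1 (x y : ℝ) : ℝ :=
  if x = y then Real.exp x else (Real.exp x - Real.exp y) / (x - y)

/-- `h(x,y) = eˣ + eʸ − 2·exp[x,y]`. -/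
noncomputable def hxy (x y : ℝ) : ℝ := Real.exp x + Real.exp y - 2 * dd1 x y

/-- `φ(u) = cosh u − sinh u / u`, with `φ(0)=0`. -/
noncomputable def phi (u : ℝ) : ℝ :=
  if u = 0 then 0 else Real.cosh u - Real.sinh u / u

/-- Lower incomplete gamma `γ(n,z) = ∫₀ᶻ t^(n-1) e^(−t) dt` (oriented integral). -/
noncomputable def lowerGamma (n : ℕ) (z : ℝ) : ℝ :=
  ∫ t in (0:ℝ)..z, t ^ (n - 1) * Real.exp (-t)

/-- Sum of the `k` largest coordinates of `y`. -/
noncomputable def topSum {m : ℕ} (k : ℕ) (y : Fin m → ℝ) : ℝ :=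
  sSup {t : ℝ | ∃ S : Finset (Fin m), S.card = k ∧ t = ∑ i ∈ S, y i}

/-- `e^{−t[x₀,…,x_m]}`: the divided difference of `s ↦ e^{−t s}` at the nodes `x`. -/
noncomputable def ddExpNeg (t : ℝ) {m : ℕ} (x : Fin (m + 1) → ℝ) : ℝ :=
  (-t) ^ m * expDD fun i => -t * x i


/-! For `x < y` with midpoint `m` and half-gap `u`, `h(x, y) = 2 e^m φ(u)` where
`φ(u) = cosh u - sinh u / u`. The exponential factors on both sides of the inequality agree, so
with the half-gaps `p, q, r > 0` of `a < b < c < d` it reads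
`φ(q) φ(p + q + r) + φ(p) φ(r) ≤ φ(p + q) φ(q + r)`.

This holds for every `f ≥ 0` with `f(0+) = 0` and `f'' = g f`, `g` decreasing (for `φ`,
`g(u) = 1 + 2 / u²`). Indeed `F(θ) = f(p + θ) f(r + θ) - f(θ) f(p + r + θ)` tends to `f(p) f(r)`
as `θ → 0+`, and it is nondecreasing: both products are products of `f` at two points with the
same sum, and `d/dθ [f(x + θ) f(y + θ)]` grows as the pair `x, y` moves inwards with fixed sum,
since its derivative along `x + y = T` is `f(x) f(y) (g(x) - g(y))`. -/

open Set Topology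

section FourPoint

variable {f f' g : ℝ → ℝ}

theorem deriv_mul_add_mul_deriv_le (hf : ∀ u, 0 < u → HasDerivAt f (f' u) u)
    (hf' : ∀ u, 0 < u → HasDerivAt f' (g u * f u) u) (hg : AntitoneOn g (Ioi 0))
    (hf₀ : ∀ u, 0 < u → 0 ≤ f u) {x y x' y' : ℝ} (hx : 0 < x) (hxx' : x ≤ x') (hxy' : x ≤ y') (hsum : x' + y' = x + y) :
    f' x * f y + f x * f' y ≤ f' x' * f y' + f x' * f' y' := by
  wlog hx'y' : x' ≤ y' generalizing x' y'
  · have := this hxy' hxx' (by linarith) (by linarith)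
    linarith
  set T := x + y
  have hpos : ∀ s ∈ Icc x x', 0 < s ∧ 0 < T - s := fun s hs =>
    ⟨by linarith [hs.1], by linarith [hs.2]⟩
  have hΨ : ∀ s ∈ Icc x x', HasDerivAt (fun s => f' s * f (T - s) + f s * f' (T - s))
      (f s * f (T - s) * (g s - g (T - s))) s := by
    intro s hs
    obtain ⟨hs₀, hTs₀⟩ := hpos s hs
    exact (((hf' s hs₀).mul ((hf _ hTs₀).comp_const_sub T s)).add
      ((hf s hs₀).mul ((hf' _ hTs₀).comp_const_sub T s))).congr_deriv (by ring)
  have hmono : MonotoneOn (fun s => f' s * f (T - s) + f s * f' (T - s)) (Icc x x') := by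
    refine monotoneOn_of_hasDerivWithinAt_nonneg (convex_Icc x x')
      (fun s hs => (hΨ s hs).continuousAt.continuousWithinAt)
      (fun s hs => (hΨ s (interior_subset hs)).hasDerivWithinAt) fun s hs => ?_
    obtain ⟨hs₀, hTs₀⟩ := hpos s (interior_subset hs)
    have hsT : s ≤ T - s := by rw [interior_Icc] at hs; linarith [hs.2]
    exact mul_nonneg (mul_nonneg (hf₀ s hs₀) (hf₀ _ hTs₀))
      (sub_nonneg.2 (hg hs₀ (hs₀.trans_le hsT) hsT))
  simpa only [T, add_sub_cancel_left, show x + y - x' = y' by linarith] using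
    hmono (left_mem_Icc.2 hxx') (right_mem_Icc.2 hxx') hxx'

theorem mul_add_mul_le_mul_of_antitoneOn (hf : ∀ u, 0 < u → HasDerivAt f (f' u) u)
    (hf' : ∀ u, 0 < u → HasDerivAt f' (g u * f u) u) (hg : AntitoneOn g (Ioi 0))
    (hf₀ : ∀ u, 0 < u → 0 ≤ f u) (hf_zero : Tendsto f (𝓝[>] 0) (𝓝 0))
    {p q r : ℝ} (hp : 0 < p) (hq : 0 < q) (hr : 0 < r) :
    f q * f (p + q + r) + f p * f r ≤ f (p + q) * f (q + r) := by
  set F : ℝ → ℝ := fun t => f (p + t) * f (r + t) - f t * f (p + r + t)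
  have hF : ∀ t ∈ Ioi (0 : ℝ), HasDerivAt F ((f' (p + t) * f (r + t) + f (p + t) * f' (r + t))
      - (f' t * f (p + r + t) + f t * f' (p + r + t))) t := fun t (ht : 0 < t) =>
    (((hf _ (by positivity)).comp_const_add p t).mul
      ((hf _ (by positivity)).comp_const_add r t)).sub
        ((hf t ht).mul ((hf _ (by positivity)).comp_const_add (p + r) t))
  have hmono : MonotoneOn F (Ioi 0) := by
    refine monotoneOn_of_hasDerivWithinAt_nonneg (convex_Ioi 0)
      (fun t ht => (hF t ht).continuousAt.continuousWithinAt)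
      (fun t ht => (hF t (interior_subset ht)).hasDerivWithinAt) fun t ht => ?_
    rw [interior_Ioi] at ht
    exact sub_nonneg.2 (deriv_mul_add_mul_deriv_le hf hf' hg hf₀ ht (by linarith) (by linarith)
      (by ring))
  have hcont : ∀ x, 0 < x → Tendsto (fun t => f (x + t)) (𝓝[>] 0) (𝓝 (f x)) := fun x hx =>
    (hf x hx).continuousAt.tendsto.comp
      (((continuous_const.add continuous_id).tendsto' 0 x (add_zero x)).mono_left
        nhdsWithin_le_nhds)
  have hF_zero : Tendsto F (𝓝[>] 0) (𝓝 (f p * f r)) := by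
    simpa using ((hcont p hp).mul (hcont r hr)).sub (hf_zero.mul (hcont (p + r) (by positivity)))
  have hFq : f p * f r ≤ F q := le_of_tendsto hF_zero <| by
    filter_upwards [Ioc_mem_nhdsGT hq] with t ht using hmono ht.1 hq ht.2
  simp only [F, add_comm r q, add_right_comm p r q] at hFq
  linarith

end FourPoint

section Phi

variable {u : ℝ}

theorem phi_of_ne_zero (hu : u ≠ 0) : phi u = cosh u - sinh u / u := if_neg hu

noncomputable def phiDeriv (u : ℝ) : ℝ := sinh u - cosh u / u + sinh u / u ^ 2

theorem hasDerivAt_phi (hu : u ≠ 0) : HasDerivAt phi (phiDeriv u) u := by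
  have h : HasDerivAt (fun v => cosh v - sinh v / v) (phiDeriv u) u :=
    ((hasDerivAt_cosh u).sub ((hasDerivAt_sinh u).div (hasDerivAt_id' u) hu)).congr_deriv <| by
      unfold phiDeriv; field_simp; ring
  exact h.congr_of_eventuallyEq ((eventually_ne_nhds hu).mono fun v hv => phi_of_ne_zero hv)

theorem hasDerivAt_phiDeriv (hu : u ≠ 0) : HasDerivAt phiDeriv ((1 + 2 / u ^ 2) * phi u) u := by
  have h := ((hasDerivAt_sinh u).sub ((hasDerivAt_cosh u).div (hasDerivAt_id' u) hu)).add
    ((hasDerivAt_sinh u).div (hasDerivAt_pow 2 u) (pow_ne_zero 2 hu))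
  refine h.congr_deriv ?_
  rw [phi_of_ne_zero hu]
  field_simp
  ring

theorem sinh_lt_mul_cosh (hu : 0 < u) : sinh u < u * cosh u := by
  have hderiv : ∀ x, HasDerivAt (fun x => x * cosh x - sinh x) (x * sinh x) x := fun x =>
    (((hasDerivAt_id x).mul (hasDerivAt_cosh x)).sub (hasDerivAt_sinh x)).congr_deriv (by simp)
  have hmono : StrictMonoOn (fun x => x * cosh x - sinh x) (Ici 0) :=
    strictMonoOn_of_hasDerivWithinAt_pos (convex_Ici 0)
      (fun x _ => (hderiv x).continuousAt.continuousWithinAt)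
      (fun x _ => (hderiv x).hasDerivWithinAt) fun x hx => by
        rw [interior_Ici] at hx
        exact mul_pos hx (sinh_pos_iff.2 hx)
  have := hmono self_mem_Ici hu.le hu
  simp only [zero_mul, sinh_zero, sub_zero] at this
  linarith

theorem phi_pos (hu : 0 < u) : 0 < phi u := by
  rw [phi_of_ne_zero hu.ne', sub_pos, div_lt_iff₀ hu, mul_comm]
  exact sinh_lt_mul_cosh hu

theorem tendsto_phi_nhdsGT_zero : Tendsto phi (𝓝[>] 0) (𝓝 0) := by
  have hle : ∀ᶠ u in 𝓝[>] (0 : ℝ), phi u ≤ cosh u - 1 := by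
    filter_upwards [self_mem_nhdsWithin] with u (hu : 0 < u)
    have : 1 ≤ sinh u / u := by rw [le_div_iff₀ hu, one_mul]; exact self_le_sinh_iff.2 hu.le
    rw [phi_of_ne_zero hu.ne']
    linarith
  have hcosh : Tendsto (fun u => cosh u - 1) (𝓝[>] 0) (𝓝 0) := by
    simpa using ((continuous_cosh.tendsto 0).sub (tendsto_const_nhds (x := (1 : ℝ)))).mono_left
      nhdsWithin_le_nhds
  exact squeeze_zero' (eventually_nhdsWithin_of_forall fun u hu => (phi_pos hu).le) hle hcosh

theorem phi_mul_add_mul_le {p q r : ℝ} (hp : 0 < p) (hq : 0 < q) (hr : 0 < r) :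
    phi q * phi (p + q + r) + phi p * phi r ≤ phi (p + q) * phi (q + r) := by
  have hg : AntitoneOn (fun u : ℝ => 1 + 2 / u ^ 2) (Ioi 0) := fun x (hx : 0 < x) y _ hxy => by
    change 1 + 2 / y ^ 2 ≤ 1 + 2 / x ^ 2
    gcongr
  exact mul_add_mul_le_mul_of_antitoneOn (fun u hu => hasDerivAt_phi hu.ne')
    (fun u hu => hasDerivAt_phiDeriv hu.ne') hg (fun u hu => (phi_pos hu).le)
    tendsto_phi_nhdsGT_zero hp hq hr

end Phi

theorem exp_add_exp_sub_two_mul_slope_eq {x y : ℝ} (hxy : x ≠ y) :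
    exp x + exp y - 2 * ((exp x - exp y) / (x - y)) =
      2 * exp ((x + y) / 2) * phi ((y - x) / 2) := by
  set u := (y - x) / 2
  have hu : u ≠ 0 := by simp only [u]; intro h; apply hxy; linarith
  have hy : exp y = exp ((x + y) / 2) * exp u := by rw [← exp_add]; congr 1; ring
  have hx : exp x = exp ((x + y) / 2) * exp (-u) := by rw [← exp_add]; congr 1; ring
  rw [phi_of_ne_zero hu, cosh_eq, sinh_eq, hx, hy, show x - y = -(2 * u) by ring]
  field_simp
  ring

theorem stmt10 (a b c d : ℝ) (hab : a < b) (hbc : b < c) (hcd : c < d)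
    (H : ℝ → ℝ → ℝ)
    (hH : ∀ x y, x ≠ y →
      H x y = Real.exp x + Real.exp y - 2 * ((Real.exp x - Real.exp y) / (x - y))) :
    H b c * H a d + H a b * H c d ≤ H a c * H b d := by
  have hH_phi : ∀ x y, x < y → H x y = 2 * exp (x / 2) * exp (y / 2) * phi ((y - x) / 2) :=
    fun x y h => by
      rw [hH x y h.ne, exp_add_exp_sub_two_mul_slope_eq h.ne, add_div, exp_add]
      ring
  have key := phi_mul_add_mul_le (by linarith : 0 < (b - a) / 2) (by linarith : 0 < (c - b) / 2)
    (by linarith : 0 < (d - c) / 2)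
  rw [show (b - a) / 2 + (c - b) / 2 + (d - c) / 2 = (d - a) / 2 by ring,
    show (b - a) / 2 + (c - b) / 2 = (c - a) / 2 by ring,
    show (c - b) / 2 + (d - c) / 2 = (d - b) / 2 by ring] at key
  rw [hH_phi b c hbc, hH_phi a d (by linarith), hH_phi a b hab, hH_phi c d hcd,
    hH_phi a c (by linarith), hH_phi b d (by linarith)]
  have hE : 0 ≤ 4 * exp (a / 2) * exp (b / 2) * exp (c / 2) * exp (d / 2) := by positivity
  linear_combination mul_le_mul_of_nonneg_left key hE
end

section
/- For distinct a, b, c, d ∈ ℝ, the quantity f(a,b,c,d) = exp[a,a,b,c]·exp[d,d,b,c] + exp[b,b,a,d]·exp[c,c,a,d] − exp[a,b,c,d]² equals (h(a,c)h(b,d) + h(a,b)h(c,d) − h(b,c)h(a,d)) / (2(a−b)(a−c)(b−d)(c−d)), where h(x,y) = e^x + e^y − 2·exp[x,y]. -/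
open MeasureTheory Real Filter Finset Asymptotics

/-
Over the ordered simplex the Hermite–Genocchi integral for four nodes is an iterated interval
integral, and integrating out the innermost variable gives the recursion
exp[w,x,y,z] = (exp[w,x,z] - exp[w,x,y]) / (z - y), valid whenever x, y, z are distinct; a repeated
first node only enters through exp[w,w] = e^w. So every divided difference in the identity is an
explicit rational expression in e^a, e^b, e^c, e^d, and the identity is checked by clearing
denominators.
-/

lemma integral_exp_innermost (B x y z s : ℝ) (hyz : y ≠ z) :
    ∫ t in (0:ℝ)..s, exp (B + s * (y - x) + t * (z - y))
      = (exp (B + s * (z - x)) - exp (B + s * (y - x))) / (z - y) := by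
  have hzy : z - y ≠ 0 := sub_ne_zero.2 hyz.symm
  have hderiv : ∀ t ∈ Set.uIcc 0 s,
      HasDerivAt (fun t => exp (B + s * (y - x) + t * (z - y)) / (z - y))
        (exp (B + s * (y - x) + t * (z - y))) t := fun t _ => by
    simpa only [mul_div_cancel_right₀ _ hzy] using
      (((hasDerivAt_mul_const (z - y)).const_add (B + s * (y - x))).exp).div_const (z - y)
  rw [intervalIntegral.integral_eq_sub_of_hasDerivAt hderiv
    ((by fun_prop : Continuous _).intervalIntegrable _ _)]
  ring_nf

lemma integral_exp_segment (x y : ℝ) : ∫ t in (0:ℝ)..1, exp (x + t * (y - x)) = dd1 x y := by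
  rcases eq_or_ne x y with rfl | hxy
  · simp [dd1]
  · have := integral_exp_innermost x x x y 1 hxy
    simp only [sub_self, mul_zero, add_zero, one_mul, add_sub_cancel] at this
    rw [this, dd1, if_neg hxy, ← neg_div_neg_eq, neg_sub, neg_sub]

lemma integral_integral_exp (x y z : ℝ) (hyz : y ≠ z) :
    ∫ s in (0:ℝ)..1, ∫ t in (0:ℝ)..s, exp (x + s * (y - x) + t * (z - y))
      = (dd1 x z - dd1 x y) / (z - y) := by
  simp_rw [integral_exp_innermost x x y z _ hyz]
  simp (disch := exact (by fun_prop : Continuous _).intervalIntegrable _ _) only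
    [intervalIntegral.integral_sub, intervalIntegral.integral_div]
  rw [integral_exp_segment, integral_exp_segment]

lemma integral_integral_integral_exp (w x y z : ℝ) (hxy : x ≠ y) (hxz : x ≠ z) (hyz : y ≠ z) :
    ∫ r in (0:ℝ)..1, ∫ s in (0:ℝ)..r, ∫ t in (0:ℝ)..s,
        exp (w + r * (x - w) + s * (y - x) + t * (z - y))
      = ((dd1 w z - dd1 w x) / (z - x) - (dd1 w y - dd1 w x) / (y - x)) / (z - y) := by
  -- found by `fun_prop` when the outer integral is split below
  have hcont (v : ℝ) : Continuous fun r => ∫ s in (0:ℝ)..r, exp (w + r * (x - w) + s * (v - x)) :=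
    intervalIntegral.continuous_parametric_intervalIntegral_of_continuous (by fun_prop) continuous_id
  simp_rw [integral_exp_innermost _ x y z _ hyz]
  simp (disch := exact (by fun_prop : Continuous _).intervalIntegrable _ _) only
    [intervalIntegral.integral_sub, intervalIntegral.integral_div]
  rw [integral_integral_exp w x z hxz, integral_integral_exp w x y hxy]

lemma setIntegral_fibered_eq_intervalIntegral {α : Type*} [MeasureSpace α]
    [SFinite (volume : Measure α)] {a b : ℝ} (hab : a ≤ b) (S : ℝ → Set α) {f : ℝ × α → ℝ}
    (hS : MeasurableSet {p : ℝ × α | p.1 ∈ Set.Icc a b ∧ p.2 ∈ S p.1})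
    (hf : IntegrableOn f {p : ℝ × α | p.1 ∈ Set.Icc a b ∧ p.2 ∈ S p.1}) :
    ∫ p in {p : ℝ × α | p.1 ∈ Set.Icc a b ∧ p.2 ∈ S p.1}, f p
      = ∫ x in a..b, ∫ y in S x, f (x, y) := by
  rw [← integral_indicator hS, Measure.volume_eq_prod, integral_prod _ (hf.integrable_indicator hS),
    intervalIntegral.integral_of_le hab, ← integral_Icc_eq_integral_Ioc,
    ← integral_indicator measurableSet_Icc]
  congr 1 with x
  by_cases hx : x ∈ Set.Icc a b
  · have hSx : Prod.mk x ⁻¹' {p : ℝ × α | p.1 ∈ Set.Icc a b ∧ p.2 ∈ S p.1} = S x := by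
      ext y; exact and_iff_right hx
    rw [Set.indicator_of_mem hx, ← hSx, ← integral_indicator (measurable_prodMk_left hS)]
    rfl
  · simp [Set.indicator, hx]

lemma setIntegral_simplex_eq_intervalIntegral {g : ℝ × ℝ × ℝ → ℝ} (hg : Continuous g) :
    ∫ p in {p : ℝ × ℝ × ℝ | p.1 ∈ Set.Icc 0 1 ∧
        p.2 ∈ {q : ℝ × ℝ | q.1 ∈ Set.Icc 0 p.1 ∧ q.2 ∈ Set.Icc 0 q.1}}, g p
      = ∫ r in (0:ℝ)..1, ∫ s in (0:ℝ)..r, ∫ t in (0:ℝ)..s, g (r, s, t) := by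
  have hbox : {p : ℝ × ℝ × ℝ | p.1 ∈ Set.Icc 0 1 ∧
      p.2 ∈ {q : ℝ × ℝ | q.1 ∈ Set.Icc 0 p.1 ∧ q.2 ∈ Set.Icc 0 q.1}} ⊆ Set.Icc 0 1 := by
    rintro ⟨r, s, t⟩ ⟨⟨h0r, hr1⟩, ⟨h0s, hsr⟩, h0t, hts⟩
    exact ⟨⟨h0r, h0s, h0t⟩, hr1, hsr.trans hr1, (hts.trans hsr).trans hr1⟩
  refine (setIntegral_fibered_eq_intervalIntegral zero_le_one
    (fun r => {q : ℝ × ℝ | q.1 ∈ Set.Icc 0 r ∧ q.2 ∈ Set.Icc 0 q.1}) (by measurability)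
    ((hg.integrableOn_Icc).mono_set hbox)).trans ?_
  refine intervalIntegral.integral_congr fun r hr => ?_
  rw [Set.uIcc_of_le zero_le_one] at hr
  refine (setIntegral_fibered_eq_intervalIntegral hr.1 (Set.Icc 0) (by measurability)
    ((hg.comp (Continuous.prodMk_right r)).integrableOn_Icc (a := 0) (b := (r, r)).mono_set
      ?_)).trans ?_
  · rintro ⟨s, t⟩ ⟨⟨h0s, hsr⟩, h0t, hts⟩
    exact ⟨⟨h0s, h0t⟩, hsr, hts.trans hsr⟩
  refine intervalIntegral.integral_congr fun s hs => ?_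
  rw [Set.uIcc_of_le hr.1] at hs
  rw [intervalIntegral.integral_of_le hs.1, integral_Icc_eq_integral_Ioc]
  rfl

noncomputable def prodProdEquivFinThree : (ℝ × ℝ × ℝ) ≃ᵐ (Fin 3 → ℝ) :=
  (MeasurableEquiv.prodCongr (MeasurableEquiv.refl ℝ) MeasurableEquiv.finTwoArrow.symm).trans
    (MeasurableEquiv.piFinSuccAbove (fun _ => ℝ) 0).symm

lemma prodProdEquivFinThree_apply (p : ℝ × ℝ × ℝ) :
    prodProdEquivFinThree p = ![p.1, p.2.1, p.2.2] := by
  ext i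
  fin_cases i <;> rfl

lemma measurePreserving_prodProdEquivFinThree :
    MeasurePreserving prodProdEquivFinThree volume volume :=
  (volume_preserving_piFinSuccAbove (fun _ : Fin 3 => ℝ) 0).symm.comp
    ((MeasurePreserving.id volume).prod (measurePreserving_finTwoArrow volume).symm)

lemma expDD_fin_four (x : Fin 4 → ℝ) :
    expDD x = ∫ r in (0:ℝ)..1, ∫ s in (0:ℝ)..r, ∫ t in (0:ℝ)..s,
      exp (x 0 + r * (x 1 - x 0) + s * (x 2 - x 1) + t * (x 3 - x 2)) := by
  have hsimplex : prodProdEquivFinThree ⁻¹'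
        {t : Fin 3 → ℝ | (∀ i, 0 ≤ t i ∧ t i ≤ 1) ∧ ∀ i j : Fin 3, i ≤ j → t j ≤ t i}
      = {p : ℝ × ℝ × ℝ | p.1 ∈ Set.Icc 0 1 ∧
          p.2 ∈ {q : ℝ × ℝ | q.1 ∈ Set.Icc 0 p.1 ∧ q.2 ∈ Set.Icc 0 q.1}} := by
    ext ⟨r, s, t⟩
    rw [Set.mem_preimage, prodProdEquivFinThree_apply]
    constructor
    · rintro ⟨hbd, hanti⟩
      exact ⟨hbd 0, ⟨(hbd 1).1, hanti 0 1 (by decide)⟩, (hbd 2).1, hanti 1 2 (by decide)⟩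
    · rintro ⟨⟨h0r, hr1⟩, ⟨h0s, hsr⟩, h0t, hts⟩
      refine ⟨fun i => ?_, fun i j hij => ?_⟩
      · fin_cases i <;> constructor <;> dsimp <;> linarith
      · fin_cases i <;> fin_cases j <;> first | exact absurd hij (by decide) | (dsimp; linarith)
  rw [expDD, ← measurePreserving_prodProdEquivFinThree.setIntegral_preimage_emb
    prodProdEquivFinThree.measurableEmbedding, hsimplex]
  convert setIntegral_simplex_eq_intervalIntegral (g := fun p : ℝ × ℝ × ℝ =>
    exp (x 0 + p.1 * (x 1 - x 0) + p.2.1 * (x 2 - x 1) + p.2.2 * (x 3 - x 2))) (by fun_prop)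
    using 4 with p
  simp [prodProdEquivFinThree_apply, Fin.sum_univ_three, add_assoc]

lemma expDD_four_of_ne (w x y z : ℝ) (hxy : x ≠ y) (hxz : x ≠ z) (hyz : y ≠ z) :
    expDD ![w, x, y, z]
      = ((dd1 w z - dd1 w x) / (z - x) - (dd1 w y - dd1 w x) / (y - x)) / (z - y) := by
  rw [expDD_fin_four]
  exact integral_integral_integral_exp w x y z hxy hxz hyz

theorem stmt11 (a b c d : ℝ) (hab : a ≠ b) (hac : a ≠ c) (had : a ≠ d)
    (hbc : b ≠ c) (hbd : b ≠ d) (hcd : c ≠ d) :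
    expDD ![a, a, b, c] * expDD ![d, d, b, c]
        + expDD ![b, b, a, d] * expDD ![c, c, a, d] - (expDD ![a, b, c, d]) ^ 2
      = (hxy a c * hxy b d + hxy a b * hxy c d - hxy b c * hxy a d)
          / (2 * (a - b) * (a - c) * (b - d) * (c - d)) := by
  rw [expDD_four_of_ne a a b c hab hac hbc, expDD_four_of_ne d d b c hbd.symm hcd.symm hbc,
    expDD_four_of_ne b b a d hab.symm hbd had, expDD_four_of_ne c c a d hac.symm hcd had,
    expDD_four_of_ne a b c d hbc hbd hcd]
  simp only [hxy, dd1, hab, hac, had, hbc, hbd, hcd, hab.symm, hac.symm, hbd.symm,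
    hcd.symm, if_true, if_false]
  -- one orientation per difference, so that `field_simp` finds the common denominator
  rw [← neg_sub a b, ← neg_sub a c, ← neg_sub a d, ← neg_sub b c, ← neg_sub b d, ← neg_sub c d]
  field_simp
  ring
end
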